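/- arXiv:2409.12964 — 5 statements merged into one kernel-verified Lean document; each statement's English description precedes it below -/
import Mathlib

section
/- Let I : ℝ^n → ℝ^n be a standard interference function (positive, monotone, and scalable). If p₁ and p₂ are both fixed points of I (i.e., I(p₁) = p₁ and I(p₂) = p₂ with p₁, p₂ ≥ 0), then p₁ = p₂; that is, the fixed point of a standard interference function is unique. -/
lemma sif_fixed_le {n : ℕ}
    (I : (Fin n → ℝ) → (Fin n → ℝ))
    (hpos : ∀ p : Fin n → ℝ, 0 ≤ p → ∀ i, 0 < I p i)
    (hmono : ∀ p q : Fin n → ℝ, 0 ≤ q → q ≤ p → I q ≤ I p)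
    (hscal : ∀ p : Fin n → ℝ, 0 ≤ p → ∀ α : ℝ, 1 < α → ∀ i, I (α • p) i < α * I p i)
    (p₁ p₂ : Fin n → ℝ) (hp₁ : 0 ≤ p₁) (hp₂ : 0 ≤ p₂)
    (hfix₁ : I p₁ = p₁) (hfix₂ : I p₂ = p₂) :
    p₁ ≤ p₂ := by
  rcases Nat.eq_zero_or_pos n with hn | hn
  · intro i; exact absurd i.2 (by omega)
  have hp2pos : ∀ i, 0 < p₂ i := fun i => hfix₂ ▸ hpos p₂ hp₂ i
  have hne : (Finset.univ : Finset (Fin n)).Nonempty :=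
    Finset.univ_nonempty_iff.mpr (Fin.pos_iff_nonempty.mp hn)
  set β := Finset.sup' Finset.univ hne (fun i => p₁ i / p₂ i) with hβ
  obtain ⟨j, _, hj⟩ := Finset.exists_mem_eq_sup' hne (fun i => p₁ i / p₂ i)
  have hle : ∀ i, p₁ i ≤ β * p₂ i := by
    intro i
    have := Finset.le_sup' (fun i => p₁ i / p₂ i) (Finset.mem_univ i)
    rw [div_le_iff₀ (hp2pos i)] at this
    exact this
  by_cases hβ1 : β ≤ 1
  · intro i
    calc p₁ i ≤ β * p₂ i := hle i
    _ ≤ 1 * p₂ i := by nlinarith [hp2pos i]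
    _ = p₂ i := one_mul _
  · push_neg at hβ1
    exfalso
    have hsm : 0 ≤ β • p₂ := fun i => by
      have := hp2pos i
      simp only [Pi.zero_apply, Pi.smul_apply, smul_eq_mul]
      nlinarith
    have h1 : p₁ j ≤ I (β • p₂) j := by
      have := hmono (β • p₂) p₁ hp₁ (fun i => by
        simpa [Pi.smul_apply, smul_eq_mul] using hle i)
      have := this j
      rwa [hfix₁] at this
    have h2 : I (β • p₂) j < β * I p₂ j := hscal p₂ hp₂ β hβ1 j
    have h3 : p₁ j = β * p₂ j := by
      have : p₁ j / p₂ j = β := hj.symm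
      field_simp [ne_of_gt (hp2pos j)] at this
      linarith [this]
    rw [hfix₂] at h2
    linarith

/-- The fixed point of a standard interference function is unique. -/
theorem standard_interference_fixed_point_unique {n : ℕ}
    (I : (Fin n → ℝ) → (Fin n → ℝ))
    (hpos : ∀ p : Fin n → ℝ, 0 ≤ p → ∀ i, 0 < I p i)
    (hmono : ∀ p q : Fin n → ℝ, 0 ≤ q → q ≤ p → I q ≤ I p)
    (hscal : ∀ p : Fin n → ℝ, 0 ≤ p → ∀ α : ℝ, 1 < α → ∀ i, I (α • p) i < α * I p i)
    (p₁ p₂ : Fin n → ℝ) (hp₁ : 0 ≤ p₁) (hp₂ : 0 ≤ p₂)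
    (hfix₁ : I p₁ = p₁) (hfix₂ : I p₂ = p₂) :
    p₁ = p₂ :=
  le_antisymm
    (sif_fixed_le I hpos hmono hscal p₁ p₂ hp₁ hp₂ hfix₁ hfix₂)
    (sif_fixed_le I hpos hmono hscal p₂ p₁ hp₂ hp₁ hfix₂ hfix₁)
end

section
/- Fix r > 0, G_ll > 0, nonnegative G_lj for j ≠ l, and σ > 0. Define SINR_l(p) = G_ll p_l/(Σ_{j≠l} G_lj p_j + σ) and I_l(p) = r·p_l / log(1 + SINR_l(p)) for p > 0. Then for any α > 1 and any p > 0 componentwise, α·I_l(p) > I_l(α·p). -/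
open Finset

theorem div_add_lt_mul_div_mul_add {a S σ α : ℝ} (ha : 0 < a) (hS : 0 ≤ S) (hσ : 0 < σ)
    (hα : 1 < α) : a / (S + σ) < α * a / (α * S + σ) := by
  rw [div_lt_div_iff₀ (by positivity) (by nlinarith)]
  nlinarith [mul_pos ha (mul_pos (sub_pos.mpr hα) hσ)]

theorem div_log_one_add_lt_div_log_one_add {x s t : ℝ} (hx : 0 < x) (hs : 0 < s) (hst : s < t) :
    x / Real.log (1 + t) < x / Real.log (1 + s) :=
  div_lt_div_of_pos_left hx (Real.log_pos (by linarith))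
    (Real.log_lt_log (by linarith) (by linarith))

/-- Scalability of the Shannon-capacity interference function:
α·I_l(p) > I_l(α·p) for all α > 1 and p > 0. -/
theorem shannon_interference_scalable {n : ℕ} (l : Fin n)
    (r : ℝ) (hr : 0 < r) (G : Fin n → ℝ) (hGll : 0 < G l)
    (hG : ∀ j, j ≠ l → 0 ≤ G j) (σ : ℝ) (hσ : 0 < σ) :
    let SINR : (Fin n → ℝ) → ℝ :=
      fun p => G l * p l / (∑ j ∈ univ.erase l, G j * p j + σ)
    let I : (Fin n → ℝ) → ℝ := fun p => r * p l / Real.log (1 + SINR p)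
    ∀ α : ℝ, 1 < α → ∀ p : Fin n → ℝ, (∀ i, 0 < p i) →
      I (α • p) < α * I p := by
  intro SINR I α hα p hp
  have hS : 0 ≤ ∑ j ∈ univ.erase l, G j * p j :=
    sum_nonneg fun j hj => mul_nonneg (hG j (ne_of_mem_erase hj)) (hp j).le
  have hSINR_pos : 0 < SINR p := div_pos (mul_pos hGll (hp l)) (by linarith)
  have hSINR_lt : SINR p < SINR (α • p) := by
    simp only [SINR, Pi.smul_apply, smul_eq_mul, mul_left_comm _ α, ← mul_sum]
    exact div_add_lt_mul_div_mul_add (mul_pos hGll (hp l)) hS hσ hα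
  calc I (α • p) = r * (α * p l) / Real.log (1 + SINR (α • p)) := rfl
    _ < r * (α * p l) / Real.log (1 + SINR p) :=
      div_log_one_add_lt_div_log_one_add (by have := hp l; positivity) hSINR_pos hSINR_lt
    _ = α * I p := by simp only [I]; ring
end

section
/- Fix r > 0, G_ll > 0, nonnegative G_lj for j ≠ l, and σ > 0. Define SINR_l(p) = G_ll·p_l/(Σ_{j≠l} G_lj·p_j + σ) and I_l(p) = r·p_l / log(1 + SINR_l(p)) for p > 0 componentwise. Then I_l is monotone: if p ≥ q > 0 componentwise then I_l(p) ≥ I_l(q). -/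
/-!
The interference function factors as `I_l(p) = r · (D/G_ll) · g(SINR_l(p))` with
`D = Σ_{j≠l} G_lj p_j + σ` and `g(s) = s / log(1 + s)`. Since `log (1 + ·)` is concave and
vanishes at `0`, its secant slope `log(1 + s)/s` decreases, so `g` is nondecreasing: raising `p_l`
alone does not decrease `I_l`. Raising the other powers only enlarges `D`, which shrinks
`log(1 + SINR_l)` and so enlarges `I_l`.
-/

open Finset Real

lemma antitoneOn_log_one_add_div : AntitoneOn (fun s : ℝ => log (1 + s) / s) (Set.Ioi 0) := by
  intro s hs t ht hst
  have hslope := strictConcaveOn_log_Ioi.concaveOn.antitoneOn_slope_gt (x := 1) (by norm_num)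
    (a := 1 + s) ⟨by simp only [Set.mem_Ioi] at hs ⊢; linarith, by simpa using hs⟩
    (b := 1 + t) ⟨by simp only [Set.mem_Ioi] at ht ⊢; linarith, by simpa using ht⟩ (by linarith)
  simpa [slope_def_field] using hslope

lemma monotoneOn_div_log_one_add : MonotoneOn (fun s : ℝ => s / log (1 + s)) (Set.Ioi 0) := by
  intro s hs t ht hst
  have hpos : 0 < log (1 + t) / t := div_pos (log_pos (by linarith [ht.out])) ht
  simpa only [inv_div] using inv_anti₀ hpos (antitoneOn_log_one_add_div hs ht hst)

lemma div_log_one_add_mul_div_le_of_le {r c D x x' : ℝ} (hr : 0 ≤ r) (hc : 0 < c) (hD : 0 < D)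
    (hx : 0 < x) (hxx' : x ≤ x') :
    r * x / log (1 + c * x / D) ≤ r * x' / log (1 + c * x' / D) := by
  have hx' : 0 < x' := hx.trans_le hxx'
  have key (y : ℝ) (hy : 0 < y) :
      r * y / log (1 + c * y / D) = r * D / c * (c * y / D / log (1 + c * y / D)) := by
    field_simp
  rw [key x hx, key x' hx']
  refine mul_le_mul_of_nonneg_left ?_ (by positivity)
  exact monotoneOn_div_log_one_add (show 0 < c * x / D by positivity)
    (show 0 < c * x' / D by positivity) (by gcongr)

lemma div_log_one_add_div_le_of_le {a b D D' : ℝ} (ha : 0 ≤ a) (hb : 0 < b) (hD : 0 < D)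
    (hDD' : D ≤ D') : a / log (1 + b / D) ≤ a / log (1 + b / D') := by
  have hD' : 0 < D' := hD.trans_le hDD'
  have hlog : 0 < log (1 + b / D') := log_pos (by linarith [div_pos hb hD'])
  gcongr

/-- Monotonicity of the Shannon-capacity interference function:
if p ≥ q > 0 componentwise then I_l(q) ≤ I_l(p). -/
theorem shannon_interference_monotone {n : ℕ} (l : Fin n)
    (r : ℝ) (hr : 0 < r) (G : Fin n → ℝ) (hGll : 0 < G l)
    (hG : ∀ j, j ≠ l → 0 ≤ G j) (σ : ℝ) (hσ : 0 < σ) :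
    let SINR : (Fin n → ℝ) → ℝ :=
      fun p => G l * p l / (∑ j ∈ univ.erase l, G j * p j + σ)
    let I : (Fin n → ℝ) → ℝ := fun p => r * p l / Real.log (1 + SINR p)
    ∀ p q : Fin n → ℝ, (∀ i, 0 < q i) → q ≤ p → I q ≤ I p := by
  intro SINR I p q hq hqp
  have hinterf_nonneg : 0 ≤ ∑ j ∈ univ.erase l, G j * q j :=
    sum_nonneg fun j hj => mul_nonneg (hG j (ne_of_mem_erase hj)) (hq j).le
  have hinterf_le : ∑ j ∈ univ.erase l, G j * q j ≤ ∑ j ∈ univ.erase l, G j * p j :=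
    sum_le_sum fun j hj => mul_le_mul_of_nonneg_left (hqp j) (hG j (ne_of_mem_erase hj))
  calc I q ≤ r * p l / log (1 + G l * p l / (∑ j ∈ univ.erase l, G j * q j + σ)) :=
        div_log_one_add_mul_div_le_of_le hr.le hGll (by linarith) (hq l) (hqp l)
    _ ≤ I p :=
        div_log_one_add_div_le_of_le (mul_nonneg hr.le ((hq l).le.trans (hqp l)))
          (mul_pos hGll ((hq l).trans_le (hqp l))) (by linarith) (by linarith)
end

section
/- The function h(x̃) = log(log(1 + e^{x̃})) is concave in x̃ on ℝ; i.e., log(1+e^x) is log-concave as a function of x. -/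
/-!
Write `L x = log (1 + exp x)`. Its derivative is the logistic function `(1 + exp (-x))⁻¹`, so
`(log ∘ L)' = D⁻¹` with `D x = (1 + exp (-x)) * L x`. Concavity amounts to `D` being monotone, and
`D' = 1 - exp (-x) * L x ≥ 0` is the inequality `log (1 + t) ≤ t` at `t = exp x`.
-/

open Real

namespace Real

lemma log_one_add_exp_pos (x : ℝ) : 0 < log (1 + exp x) :=
  log_pos (by linarith [exp_pos x])

lemma log_one_add_exp_le_exp (x : ℝ) : log (1 + exp x) ≤ exp x := by
  linarith [log_le_sub_one_of_pos (by positivity : (0 : ℝ) < 1 + exp x)]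

lemma hasDerivAt_log_one_add_exp (x : ℝ) :
    HasDerivAt (fun x => log (1 + exp x)) (1 + exp (-x))⁻¹ x := by
  convert ((hasDerivAt_exp x).const_add 1).log (by positivity) using 1
  rw [exp_neg]
  field_simp
  ring

lemma hasDerivAt_one_add_exp_neg_mul_log_one_add_exp (x : ℝ) :
    HasDerivAt (fun x => (1 + exp (-x)) * log (1 + exp x)) (1 - exp (-x) * log (1 + exp x)) x := by
  have hexp : HasDerivAt (fun x => 1 + exp (-x)) (-exp (-x)) x := by
    simpa using ((hasDerivAt_neg x).exp).const_add 1
  refine (hexp.mul (hasDerivAt_log_one_add_exp x)).congr_deriv ?_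
  rw [mul_inv_cancel₀ (by positivity)]
  ring

lemma monotone_one_add_exp_neg_mul_log_one_add_exp :
    Monotone fun x => (1 + exp (-x)) * log (1 + exp x) := by
  refine monotone_of_deriv_nonneg
    (fun x => (hasDerivAt_one_add_exp_neg_mul_log_one_add_exp x).differentiableAt) fun x => ?_
  rw [(hasDerivAt_one_add_exp_neg_mul_log_one_add_exp x).deriv, sub_nonneg]
  calc exp (-x) * log (1 + exp x) ≤ exp (-x) * exp x := by
        gcongr; exact log_one_add_exp_le_exp x
    _ = 1 := by rw [← exp_add, neg_add_cancel, exp_zero]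

lemma hasDerivAt_log_log_one_add_exp (x : ℝ) :
    HasDerivAt (fun x => log (log (1 + exp x))) ((1 + exp (-x)) * log (1 + exp x))⁻¹ x := by
  convert (hasDerivAt_log_one_add_exp x).log (log_one_add_exp_pos x).ne' using 1
  rw [mul_inv, div_eq_mul_inv]

end Real

/-- log(1+e^x) is log-concave: x ↦ log(log(1+e^x)) is concave on ℝ. -/
theorem log_log_one_add_exp_concave :
    ConcaveOn ℝ Set.univ (fun x : ℝ => Real.log (Real.log (1 + Real.exp x))) := by
  refine Antitone.concaveOn_univ_of_deriv
    (fun x => (hasDerivAt_log_log_one_add_exp x).differentiableAt) ?_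
  rw [funext fun x => (hasDerivAt_log_log_one_add_exp x).deriv]
  exact fun a b hab => inv_anti₀ (by have := log_one_add_exp_pos a; positivity)
    (monotone_one_add_exp_neg_mul_log_one_add_exp hab)
end

section
/- For all y ∈ (0,1), Q(√y) ≥ 1/2 − (√y/((1−y)·√(2π)))·e^{−y/2}, where Q(t) = (1/√(2π))∫_t^∞ e^{−s²/2} ds is the Gaussian tail function. -/
open Real MeasureTheory

/-! Splitting the tail at `0` gives `Q t = 1/2 - (1/√(2π)) ∫₀ᵗ e^{-s²/2} ds ≥ 1/2 - t/√(2π)`,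
since the integrand is at most `1`. For `0 ≤ y < 1` the factor `e^{-y/2}/(1 - y)` is at least `1`,
because `e^{-y/2} ≥ 1 - y/2 ≥ 1 - y`. -/

open Set intervalIntegral

lemma exp_neg_sq_div_two_eq (s : ℝ) : exp (-s ^ 2 / 2) = exp (-(1 / 2) * s ^ 2) := by
  ring_nf

lemma integrable_exp_neg_sq_div_two : Integrable fun s : ℝ => exp (-s ^ 2 / 2) := by
  simpa only [exp_neg_sq_div_two_eq] using integrable_exp_neg_mul_sq (b := 1 / 2) (by norm_num)

lemma integral_Ioi_zero_exp_neg_sq_div_two :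
    ∫ s in Ioi (0 : ℝ), exp (-s ^ 2 / 2) = √(2 * π) / 2 := by
  rw [funext exp_neg_sq_div_two_eq, integral_gaussian_Ioi, div_div_eq_mul_div, div_one, mul_comm]

lemma integral_Ioi_exp_neg_sq_div_two (t : ℝ) :
    ∫ s in Ioi t, exp (-s ^ 2 / 2) = √(2 * π) / 2 - ∫ s in 0..t, exp (-s ^ 2 / 2) := by
  rw [← integral_Ioi_zero_exp_neg_sq_div_two,
    ← integral_Ioi_sub_Ioi' integrable_exp_neg_sq_div_two.integrableOn
      integrable_exp_neg_sq_div_two.integrableOn, sub_sub_cancel]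

lemma integral_exp_neg_sq_div_two_le {t : ℝ} (ht : 0 ≤ t) :
    ∫ s in 0..t, exp (-s ^ 2 / 2) ≤ t := by
  calc ∫ s in 0..t, exp (-s ^ 2 / 2)
      ≤ ∫ _ in 0..t, (1 : ℝ) :=
        integral_mono_on ht integrable_exp_neg_sq_div_two.intervalIntegrable
          intervalIntegrable_const fun s _ => exp_le_one_iff.mpr (by nlinarith [sq_nonneg s])
    _ = t := by simp

lemma le_div_one_sub_mul_exp_neg_half {x y : ℝ} (hx : 0 ≤ x) (hy₀ : 0 ≤ y) (hy₁ : y < 1) :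
    x ≤ x / (1 - y) * exp (-y / 2) := by
  have h1y : 0 < 1 - y := by linarith
  have hexp : 1 - y ≤ exp (-y / 2) := by
    have := one_sub_le_exp_neg (y / 2)
    rw [neg_div]
    linarith
  rw [div_mul_eq_mul_div, le_div_iff₀ h1y]
  exact mul_le_mul_of_nonneg_left hexp hx

/-- For y ∈ (0,1): Q(√y) ≥ 1/2 − (√y/((1−y)√(2π)))·e^{−y/2}, where
Q(t) = (1/√(2π)) ∫_t^∞ e^{−s²/2} ds is the Gaussian tail function. -/
theorem gaussian_Q_lower_bound (y : ℝ) (hy : y ∈ Set.Ioo (0 : ℝ) 1) :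
    let Q : ℝ → ℝ := fun t =>
      (1 / Real.sqrt (2 * π)) * ∫ s in Set.Ioi t, Real.exp (-s ^ 2 / 2)
    Q (Real.sqrt y) ≥
      1 / 2 - (Real.sqrt y / ((1 - y) * Real.sqrt (2 * π))) * Real.exp (-y / 2) := by
  intro Q
  have ht : 0 ≤ √y := sqrt_nonneg y
  have h1y : 1 - y ≠ 0 := by linarith [hy.2]
  calc 1 / 2 - √y / ((1 - y) * √(2 * π)) * exp (-y / 2)
      = 1 / 2 - √y / (1 - y) * exp (-y / 2) / √(2 * π) := by field_simp
    _ ≤ 1 / 2 - √y / √(2 * π) := by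
        gcongr
        exact le_div_one_sub_mul_exp_neg_half ht hy.1.le hy.2
    _ ≤ 1 / 2 - (∫ s in 0..√y, exp (-s ^ 2 / 2)) / √(2 * π) := by
        gcongr
        exact integral_exp_neg_sq_div_two_le ht
    _ = Q √y := by
        simp only [Q, integral_Ioi_exp_neg_sq_div_two]
        field_simp
end
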